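/- arXiv:2208.13041 — 2 statements merged into one kernel-verified Lean document; each statement's English description precedes it below -/
import Mathlib

section
/- Let (X, μ, F) be a measure-preserving dynamical system on a probability space, and let V ⊆ X be measurable. Define Z(V) = {p ∈ X : liminf_{N→∞} (1/N) Σ_{k=0}^{N} 1_V(F^k p) = 0} and P(V) = ⋃_{k≥0} F^{-k}(V). Then μ(P(V) ∩ Z(V)) = 0. -/
/-!
Let `A = V ∩ Z(V)`. Points of `A` have, for every `ε > 0`, an initial orbit segment spending
a fraction `< ε` of its time in `A`, so the Birkhoff sums of `ε - 1_A` become positive on all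
of `A`. Garsia's maximal ergodic theorem makes the integral of `ε - 1_A` over that set
nonnegative, whence `μ A ≤ ε` for every `ε`, i.e. `μ A = 0`. Dropping the first visit changes
the frequencies by at most a factor of two, so `Z(V)` is forward invariant; hence
`P(V) ∩ Z(V)` lies in `⋃ₖ F⁻ᵏ A`, a union of null sets.
-/

open MeasureTheory Filter Finset Topology

section BirkhoffMax

variable {α : Type*} {f : α → α} {g : α → ℝ} {n : ℕ}

noncomputable def birkhoffMax (f : α → α) (g : α → ℝ) (n : ℕ) : α → ℝ :=
  (range (n + 1)).sup' nonempty_range_add_one (birkhoffSum f g)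

theorem birkhoffMax_apply (x : α) :
    birkhoffMax f g n x = (range (n + 1)).sup' nonempty_range_add_one (birkhoffSum f g · x) :=
  Finset.sup'_apply _ _ _

theorem birkhoffSum_le_birkhoffMax {k : ℕ} (hk : k ≤ n) (x : α) :
    birkhoffSum f g k x ≤ birkhoffMax f g n x := by
  rw [birkhoffMax_apply]
  exact le_sup' (fun k => birkhoffSum f g k x) (mem_range_succ_iff.2 hk)

theorem birkhoffMax_nonneg (x : α) : 0 ≤ birkhoffMax f g n x := by
  simpa using birkhoffSum_le_birkhoffMax (f := f) (g := g) n.zero_le x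

theorem birkhoffMax_mono (x : α) : Monotone (birkhoffMax f g · x) := by
  intro m n hmn
  dsimp only
  rw [birkhoffMax_apply, sup'_le_iff]
  exact fun k hk => birkhoffSum_le_birkhoffMax ((mem_range_succ_iff.1 hk).trans hmn) x

theorem zero_lt_birkhoffMax_iff {x : α} :
    0 < birkhoffMax f g n x ↔ ∃ k ≤ n, 0 < birkhoffSum f g k x := by
  simp [birkhoffMax_apply, lt_sup'_iff]

theorem birkhoffMax_le_max_zero_add (x : α) :
    birkhoffMax f g n x ≤ max 0 (g x + birkhoffMax f g n (f x)) := by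
  rw [birkhoffMax_apply, sup'_le_iff]
  rintro (_ | k) hk
  · simp
  · rw [birkhoffSum_succ']
    have hkn : k ≤ n := (Nat.succ_lt_succ_iff.1 (mem_range.1 hk)).le
    exact le_max_of_le_right (by gcongr; exact birkhoffSum_le_birkhoffMax hkn _)

theorem birkhoffSum_mono {g' : α → ℝ} (h : g ≤ g') (n : ℕ) (x : α) :
    birkhoffSum f g n x ≤ birkhoffSum f g' n x :=
  sum_le_sum fun _ _ => h _

variable [MeasurableSpace α] {μ : Measure α}

theorem measurable_birkhoffMax (hf : Measurable f) (hg : Measurable g) :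
    Measurable (birkhoffMax f g n) :=
  Finset.measurable_sup' _ fun _ _ =>
    Finset.measurable_sum _ fun i _ => hg.comp (hf.iterate i)

theorem integrable_birkhoffSum (hf : MeasurePreserving f μ μ) (hg : Integrable g μ) (n : ℕ) :
    Integrable (birkhoffSum f g n) μ :=
  integrable_finsetSum _ fun k _ => (hf.iterate k).integrable_comp_of_integrable hg

theorem integrable_birkhoffMax (hf : MeasurePreserving f μ μ) (hg : Integrable g μ) :
    Integrable (birkhoffMax f g n) μ :=
  sup'_induction (p := (Integrable · μ)) _ _ (fun _ h₁ _ h₂ => h₁.sup h₂) fun k _ =>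
    integrable_birkhoffSum hf hg k

theorem setIntegral_pos_birkhoffMax_nonneg (hf : MeasurePreserving f μ μ) (hgm : Measurable g)
    (hg : Integrable g μ) (n : ℕ) :
    0 ≤ ∫ x in {x | 0 < birkhoffMax f g n x}, g x ∂μ := by
  set M := birkhoffMax f g n
  set E := {x | 0 < M x}
  have hM : Integrable M μ := integrable_birkhoffMax hf hg
  have hMf : Integrable (M ∘ f) μ := hf.integrable_comp_of_integrable hM
  have hMm : Measurable M := measurable_birkhoffMax hf.measurable hgm
  have hE : MeasurableSet E := measurableSet_lt measurable_const hMm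
  have hMg : ∀ x ∈ E, M x - M (f x) ≤ g x := fun x hx => by
    have := (le_max_iff.1 (birkhoffMax_le_max_zero_add x)).resolve_left (not_le.2 hx)
    linarith
  have hMf_eq : ∫ x, M (f x) ∂μ = ∫ x, M x ∂μ := by
    rw [← integral_map hf.aemeasurable hMm.aestronglyMeasurable, hf.map_eq]
  have hME : ∫ x in E, M x ∂μ = ∫ x, M x ∂μ :=
    setIntegral_eq_integral_of_forall_compl_eq_zero fun x hx =>
      le_antisymm (not_lt.1 hx) (birkhoffMax_nonneg x)
  have hMfE : ∫ x in E, M (f x) ∂μ ≤ ∫ x, M (f x) ∂μ :=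
    setIntegral_le_integral hMf (ae_of_all _ fun x => birkhoffMax_nonneg (f x))
  calc (0 : ℝ) ≤ ∫ x in E, M x ∂μ - ∫ x in E, M (f x) ∂μ := by linarith
    _ = ∫ x in E, (M x - M (f x)) ∂μ := (integral_sub hM.integrableOn hMf.integrableOn).symm
    _ ≤ ∫ x in E, g x ∂μ :=
        setIntegral_mono_on (hM.integrableOn.sub hMf.integrableOn) hg.integrableOn hE hMg

/-- Garsia's maximal ergodic theorem. -/
theorem setIntegral_exists_birkhoffSum_pos_nonneg (hf : MeasurePreserving f μ μ)
    (hgm : Measurable g) (hg : Integrable g μ) :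
    0 ≤ ∫ x in {x | ∃ n, 0 < birkhoffSum f g n x}, g x ∂μ := by
  have hunion : {x | ∃ n, 0 < birkhoffSum f g n x} = ⋃ n, {x | 0 < birkhoffMax f g n x} := by
    ext x
    simp only [Set.mem_ofPred_eq, Set.mem_iUnion, zero_lt_birkhoffMax_iff]
    exact ⟨fun ⟨n, hn⟩ => ⟨n, n, le_rfl, hn⟩, fun ⟨_, k, _, hk⟩ => ⟨k, hk⟩⟩
  rw [hunion]
  refine ge_of_tendsto (tendsto_setIntegral_of_monotone (fun n => ?_) (fun m n hmn x hx => ?_)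
    hg.integrableOn) (Eventually.of_forall (setIntegral_pos_birkhoffMax_nonneg hf hgm hg))
  · exact measurableSet_lt measurable_const (measurable_birkhoffMax hf.measurable hgm)
  · exact hx.trans_le (birkhoffMax_mono x hmn)

end BirkhoffMax

section NullSet

variable {α : Type*} [MeasurableSpace α] {μ : Measure α} {f : α → α}

theorem measure_eq_zero_of_forall_exists_birkhoffSum_lt [IsFiniteMeasure μ]
    (hf : MeasurePreserving f μ μ) {A : Set α} (hA : MeasurableSet A)
    (h : ∀ x ∈ A, ∀ ε : ℝ, 0 < ε → ∃ n : ℕ, birkhoffSum f (A.indicator 1) n x < ε * n) :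
    μ A = 0 := by
  suffices key : ∀ ε > 0, μ.real A ≤ ε * μ.real Set.univ by
    have hlim : Tendsto (fun ε : ℝ => ε * μ.real Set.univ) (𝓝[>] 0) (𝓝 0) :=
      ((continuous_mul_const _).tendsto' 0 0 (zero_mul _)).mono_left nhdsWithin_le_nhds
    have : μ.real A ≤ 0 := ge_of_tendsto hlim (eventually_nhdsWithin_of_forall key)
    exact (measureReal_eq_zero_iff).1 (le_antisymm this measureReal_nonneg)
  intro ε hε
  -- Garsia's theorem for `ε - 1_A`, whose positive-sum set contains `A`.
  set g : α → ℝ := fun x => ε - A.indicator 1 x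
  set E := {x | ∃ n, 0 < birkhoffSum f g n x}
  have hAE : A ⊆ E := fun x hx => by
    obtain ⟨n, hn⟩ := h x hx ε hε
    refine ⟨n, ?_⟩
    simp only [g, birkhoffSum, sum_sub_distrib, sum_const, card_range, nsmul_eq_mul] at hn ⊢
    linarith
  have hind : Integrable (A.indicator (1 : α → ℝ)) μ := (integrable_const 1).indicator hA
  have hgE : ∫ x in E, g x ∂μ = ε * μ.real E - μ.real A := by
    rw [integral_sub (integrable_const ε).integrableOn hind.integrableOn, setIntegral_const,
      setIntegral_indicator hA, Set.inter_eq_right.2 hAE, Pi.one_def, setIntegral_const]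
    simp [mul_comm]
  have hG : 0 ≤ ∫ x in E, g x ∂μ := setIntegral_exists_birkhoffSum_pos_nonneg hf
    (measurable_const.sub (measurable_const.indicator hA)) ((integrable_const ε).sub hind)
  nlinarith [measureReal_mono (μ := μ) (Set.subset_univ E)]

end NullSet

theorem liminf_eq_zero_iff_frequently_lt {u : ℕ → ℝ} (h0 : ∀ n, 0 ≤ u n)
    (hbdd : BddAbove (Set.range u)) :
    liminf u atTop = 0 ↔ ∀ ε > 0, ∃ᶠ n in atTop, u n < ε := by
  have hcobdd : IsCoboundedUnder (· ≥ ·) atTop u :=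
    hbdd.isBoundedUnder_of_range.isCoboundedUnder_ge
  have hnonneg : 0 ≤ liminf u atTop := le_liminf_of_le hcobdd (Eventually.of_forall h0)
  refine ⟨fun h ε hε => frequently_lt_of_liminf_lt hcobdd (h ▸ hε), fun h => ?_⟩
  refine le_antisymm (le_of_forall_pos_le_add fun ε hε => ?_) hnonneg
  rw [zero_add]
  exact liminf_le_of_frequently_le ((h ε hε).mono fun _ => le_of_lt)
    (isBoundedUnder_of ⟨0, h0⟩)

section VisitRatio

variable {α : Type*} {f : α → α} {g : α → ℝ}

/-- The frequency of the statement: `N + 1` terms normalised by `N`, and `0` at `N = 0`. -/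
noncomputable def visitRatio (f : α → α) (g : α → ℝ) (x : α) (N : ℕ) : ℝ :=
  1 / (N : ℝ) * birkhoffSum f g (N + 1) x

theorem visitRatio_nonneg (h0 : 0 ≤ g) (x : α) (N : ℕ) : 0 ≤ visitRatio f g x N :=
  mul_nonneg (by positivity) (sum_nonneg fun _ _ => h0 _)

theorem visitRatio_le_two (h1 : g ≤ 1) (x : α) (N : ℕ) : visitRatio f g x N ≤ 2 := by
  rcases N.eq_zero_or_pos with rfl | hN
  · simp [visitRatio]
  have hS : birkhoffSum f g (N + 1) x ≤ N + 1 := by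
    refine (birkhoffSum_mono h1 (N + 1) x).trans_eq ?_
    simp [birkhoffSum]
  have hN' : (1 : ℝ) ≤ N := by exact_mod_cast hN
  rw [visitRatio, one_div_mul_eq_div, div_le_iff₀ (by positivity)]
  linarith

theorem visitRatio_apply_le (h0 : 0 ≤ g) (x : α) {N : ℕ} (hN : 1 ≤ N) :
    visitRatio f g (f x) N ≤ 2 * visitRatio f g x (N + 1) := by
  have hS : birkhoffSum f g (N + 1) (f x) ≤ birkhoffSum f g (N + 2) x := by
    rw [birkhoffSum_succ' f g (N + 1) x]
    exact le_add_of_nonneg_left (h0 x)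
  have hN' : (1 : ℝ) ≤ N := by exact_mod_cast hN
  have hcoef : 1 / (N : ℝ) ≤ 2 * (1 / ((N + 1 : ℕ) : ℝ)) := by
    rw [Nat.cast_succ, div_le_iff₀ (by positivity)]
    field_simp
    linarith
  calc visitRatio f g (f x) N ≤ 1 / (N : ℝ) * birkhoffSum f g (N + 2) x :=
        mul_le_mul_of_nonneg_left hS (by positivity)
    _ ≤ 2 * (1 / ((N + 1 : ℕ) : ℝ)) * birkhoffSum f g (N + 2) x :=
        mul_le_mul_of_nonneg_right hcoef (sum_nonneg fun _ _ => h0 _)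
    _ = 2 * visitRatio f g x (N + 1) := by rw [visitRatio, mul_assoc]

theorem liminf_visitRatio_eq_zero_iff (h0 : 0 ≤ g) (h1 : g ≤ 1) (x : α) :
    liminf (visitRatio f g x) atTop = 0 ↔ ∀ ε > 0, ∃ᶠ N in atTop, visitRatio f g x N < ε :=
  liminf_eq_zero_iff_frequently_lt (visitRatio_nonneg h0 x)
    ⟨2, Set.forall_mem_range.2 (visitRatio_le_two h1 x)⟩

theorem mapsTo_liminf_visitRatio_eq_zero (h0 : 0 ≤ g) (h1 : g ≤ 1) :
    Set.MapsTo f {x | liminf (visitRatio f g x) atTop = 0}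
      {x | liminf (visitRatio f g x) atTop = 0} := by
  intro x hx
  simp only [Set.mem_ofPred_eq, liminf_visitRatio_eq_zero_iff h0 h1] at hx ⊢
  intro ε hε
  refine (tendsto_sub_atTop_nat 1).frequently ((hx (ε / 2) (by positivity)).mp ?_)
  filter_upwards [eventually_ge_atTop 2] with N hN hlt
  have := visitRatio_apply_le (f := f) h0 x (N := N - 1) (by omega)
  rw [Nat.sub_add_cancel (by omega)] at this
  linarith

theorem exists_birkhoffSum_lt_of_liminf_visitRatio_eq_zero (h0 : 0 ≤ g) (h1 : g ≤ 1) {x : α}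
    (hx : liminf (visitRatio f g x) atTop = 0) {ε : ℝ} (hε : 0 < ε) :
    ∃ n : ℕ, birkhoffSum f g n x < ε * n := by
  obtain ⟨N, hN, hlt⟩ := frequently_atTop.1 ((liminf_visitRatio_eq_zero_iff h0 h1 x).1 hx ε hε) 1
  have hN' : (0 : ℝ) < N := by exact_mod_cast hN
  refine ⟨N + 1, ?_⟩
  rw [visitRatio, one_div_mul_eq_div, div_lt_iff₀ hN'] at hlt
  push_cast
  linarith

theorem measurableSet_liminf_visitRatio_eq_zero [MeasurableSpace α] (hf : Measurable f)
    (hg : Measurable g) : MeasurableSet {x | liminf (visitRatio f g x) atTop = 0} :=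
  Measurable.liminf (fun _ => measurable_const.mul (Finset.measurable_sum _ fun k _ =>
    hg.comp (hf.iterate k))) (measurableSet_singleton 0)

end VisitRatio

theorem stmt_7 {X : Type*} [MeasurableSpace X] (μ : Measure X) [IsProbabilityMeasure μ]
    (F : X → X) (hF : MeasurePreserving F μ μ) (V : Set X) (hV : MeasurableSet V) :
    μ ((⋃ k : ℕ, F^[k] ⁻¹' V) ∩
        {p : X |
          Filter.liminf
            (fun N : ℕ =>
              (1 / (N : ℝ)) *
                ∑ k ∈ Finset.range (N + 1), V.indicator (fun _ => (1 : ℝ)) (F^[k] p))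
            atTop = 0}) = 0 := by
  set Z := {p | liminf (visitRatio F (V.indicator 1) p) atTop = 0}
  have h0 : 0 ≤ V.indicator (1 : X → ℝ) := Set.indicator_nonneg fun _ _ => zero_le_one
  have h1 : V.indicator (1 : X → ℝ) ≤ 1 := Set.indicator_le_self' fun _ _ => zero_le_one
  have hZ : MeasurableSet Z :=
    measurableSet_liminf_visitRatio_eq_zero hF.measurable (measurable_one.indicator hV)
  have hVZ : μ (V ∩ Z) = 0 := by
    refine measure_eq_zero_of_forall_exists_birkhoffSum_lt hF (hV.inter hZ) fun x hx ε hε => ?_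
    obtain ⟨n, hn⟩ := exists_birkhoffSum_lt_of_liminf_visitRatio_eq_zero h0 h1 hx.2 hε
    exact ⟨n, (birkhoffSum_mono (Set.indicator_le_indicator_of_subset Set.inter_subset_left
      fun _ => zero_le_one) n x).trans_lt hn⟩
  have hsub : (⋃ k : ℕ, F^[k] ⁻¹' V) ∩ Z ⊆ ⋃ k : ℕ, F^[k] ⁻¹' (V ∩ Z) := by
    rintro p ⟨hpV, hpZ⟩
    obtain ⟨k, hk⟩ := Set.mem_iUnion.1 hpV
    exact Set.mem_iUnion.2 ⟨k, hk, (mapsTo_liminf_visitRatio_eq_zero h0 h1).iterate k hpZ⟩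
  refine measure_mono_null hsub (measure_iUnion_null fun k => ?_)
  rwa [(hF.iterate k).measure_preimage (hV.inter hZ).nullMeasurableSet]
end

section
/- Identify T*S^n with {(x,v) ∈ R^{n+1} × R^{n+1} : |x| = 1, ⟨x,v⟩ = 0}. For θ ∈ S^{n-1} ⊂ R^n × {0}, define the rotation map R_θ on T*γ = {(y₁,0,…,0,y_{n+1}; v₁,0,…,0,v_{n+1})} by R_θ(y₁,0,…,0,y_{n+1}; v₁,0,…,0,v_{n+1}) = (y_{n+1}·n + y₁·x_θ ; v_{n+1}·n + v₁·x_θ), where n = (0,…,0,1) and x_θ = (θ,0). Then for any smooth embedded curve c: [0,1] → T*γ, the set L_c = ⋃_{θ∈S^{n-1}} R_θ(c([0,1])) satisfies: the restriction of the canonical symplectic form ω = Σᵢ dyᵢ ∧ dvᵢ to L_c (away from the poles (±n, 0)) vanishes. -/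
open Finset

theorem sum_add_mul_add_of_dotProduct_eq_zero {ι : Type*} [Fintype ι] {θ ξ η : ι → ℝ}
    (hξ : θ ⬝ᵥ ξ = 0) (hη : θ ⬝ᵥ η = 0) (a b c d : ℝ) :
    ∑ i, (a * θ i + b * ξ i) * (c * θ i + d * η i) = a * c * (θ ⬝ᵥ θ) + b * d * (ξ ⬝ᵥ η) := by
  have expand : ∀ i, (a * θ i + b * ξ i) * (c * θ i + d * η i)
      = a * c * (θ i * θ i) + a * d * (θ i * η i) + b * c * (θ i * ξ i) + b * d * (ξ i * η i) :=
    fun i => by ring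
  simp only [expand, sum_add_distrib, ← mul_sum]
  simp only [dotProduct] at hξ hη ⊢
  rw [hξ, hη]
  ring

theorem stmt_10_general (n : ℕ) (y₁ v₁ y₁' yn' v₁' vn' : ℝ → ℝ) (t : ℝ) (θ ξ₁ ξ₂ : Fin n → ℝ)
    (htan₁ : ∑ i, θ i * ξ₁ i = 0) (htan₂ : ∑ i, θ i * ξ₂ i = 0) (s₁ s₂ : ℝ) :
    -- ω(DΦ(s₁,ξ₁), DΦ(s₂,ξ₂)) = 0, where
    -- DΦ(s,ξ) = (s·y₁'·θ + y₁·ξ, s·yn' ; s·v₁'·θ + v₁·ξ, s·vn')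
    ((∑ i, (s₁ * y₁' t * θ i + y₁ t * ξ₁ i) * (s₂ * v₁' t * θ i + v₁ t * ξ₂ i))
        + (s₁ * yn' t) * (s₂ * vn' t))
      - ((∑ i, (s₂ * y₁' t * θ i + y₁ t * ξ₂ i) * (s₁ * v₁' t * θ i + v₁ t * ξ₁ i))
        + (s₂ * yn' t) * (s₁ * vn' t)) = 0 := by
  -- Since `ξⱼ ⊥ θ`, the θ-parts and the ξ-parts pair separately, and each pairing is symmetric.
  rw [sum_add_mul_add_of_dotProduct_eq_zero htan₁ htan₂,
    sum_add_mul_add_of_dotProduct_eq_zero htan₂ htan₁, dotProduct_comm ξ₂ ξ₁]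
  ring

/-- the canonical symplectic form `ω = Σᵢ dyᵢ ∧ dvᵢ` of `ℝ^{2n+2}` vanishes
on pairs of tangent vectors to `L_c = ⋃_θ R_θ(c([0,1]))`, away from the poles `(±n, 0)`.
We identify `ℝ^{n+1} ≅ (Fin n → ℝ) × ℝ`, so that the rotated surface is parametrized by
`Φ(t, θ) = ((y₁ t) • θ, y_{n+1} t ; (v₁ t) • θ, v_{n+1} t)` for `θ ∈ S^{n-1}`, where
`c(t) = (y₁ t, y_{n+1} t; v₁ t, v_{n+1} t)` is a smooth embedded curve in
`T*γ ⊆ T*S^n`.  Tangent vectors to `L_c` at `Φ(t,θ)` are the images under `DΦ` of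
`(s, ξ)` with `ξ` tangent to the sphere at `θ`, i.e. `⟨θ, ξ⟩ = 0`. -/
theorem stmt_10 (n : ℕ) (y₁ yn v₁ vn y₁' yn' v₁' vn' : ℝ → ℝ)
    (hy₁ : ∀ t, HasDerivAt y₁ (y₁' t) t) (hyn : ∀ t, HasDerivAt yn (yn' t) t)
    (hv₁ : ∀ t, HasDerivAt v₁ (v₁' t) t) (hvn : ∀ t, HasDerivAt vn (vn' t) t)
    -- the curve c lies in T*S^n (in fact in T*γ): |y| = 1 and ⟨y, v⟩ = 0
    (hsph : ∀ t, (y₁ t) ^ 2 + (yn t) ^ 2 = 1)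
    (horth : ∀ t, y₁ t * v₁ t + yn t * vn t = 0)
    (t : ℝ) (ht : t ∈ Set.Icc (0 : ℝ) 1)
    -- away from the poles (±n, 0)
    (hpole : ¬(y₁ t = 0 ∧ v₁ t = 0 ∧ vn t = 0))
    (θ ξ₁ ξ₂ : Fin n → ℝ) (hθ : ∑ i, θ i ^ 2 = 1)
    (htan₁ : ∑ i, θ i * ξ₁ i = 0) (htan₂ : ∑ i, θ i * ξ₂ i = 0) (s₁ s₂ : ℝ) :
    -- ω(DΦ(s₁,ξ₁), DΦ(s₂,ξ₂)) = 0, where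
    -- DΦ(s,ξ) = (s·y₁'·θ + y₁·ξ, s·yn' ; s·v₁'·θ + v₁·ξ, s·vn')
    ((∑ i, (s₁ * y₁' t * θ i + y₁ t * ξ₁ i) * (s₂ * v₁' t * θ i + v₁ t * ξ₂ i))
        + (s₁ * yn' t) * (s₂ * vn' t))
      - ((∑ i, (s₂ * y₁' t * θ i + y₁ t * ξ₂ i) * (s₁ * v₁' t * θ i + v₁ t * ξ₁ i))
        + (s₂ * yn' t) * (s₁ * vn' t)) = 0 :=
  stmt_10_general n y₁ v₁ y₁' yn' v₁' vn' t θ ξ₁ ξ₂ htan₁ htan₂ s₁ s₂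
end
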